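/- (Energy estimate for minimizers) Let V be a real Banach space, T > 0, let the energy family E satisfy (E-a), (E-b), (E-c) (with constant C), and let Ψ_u : V → [0,∞) be lower semicontinuous and convex with Ψ_u(0) = 0. Let t ∈ [0,T), r ∈ (0, T−t], u ∈ D, and w ∈ V* with Ψ_u*(w) < ∞. Then every minimizer u_r ∈ J_{r,t}(w;u) satisfies E_{t+r}(u_r) ≤ E_{t+r}(u) + r·Ψ_u*(w), and consequently G(u_r) ≤ e^{CT}·( G(u) + r·Ψ_u*(w) ), where G(v) = sup_{s∈[0,T]} E_s(v). -/

import Mathlib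

open MeasureTheory Filter Topology Set
open scoped Classical

noncomputable section

variable {V : Type*} [NormedAddCommGroup V] [NormedSpace ℝ V]

/-- The Legendre–Fenchel transform (convex conjugate) of a real-valued functional,
with values in the extended reals. -/
def conjFn (Ψ : V → ℝ) (ξ : StrongDual ℝ V) : EReal :=
  ⨆ v : V, ((ξ v - Ψ v : ℝ) : EReal)

/-- The convex subdifferential of `Ψ` at `u`. -/
def cSubdiff (Ψ : V → ℝ) (u : V) : Set (StrongDual ℝ V) :=
  {ξ | ∀ v : V, Ψ u + ξ (v - u) ≤ Ψ v}

/-- The Fréchet subdifferential at `u ∈ D` of the functional equal to `E` on `D` and `+∞`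
off `D`:  `ξ ∈ ∂E(u)` iff `liminf_{v→u} (E(v) - E(u) - ⟨ξ,v-u⟩)/‖v-u‖ ≥ 0`, written in the
equivalent form: for all `ε > 0`, eventually near `u`, `E(v) ≥ E(u) + ⟨ξ,v-u⟩ - ε‖v-u‖`
for `v ∈ D` (for `v ∉ D` the functional is `+∞` and the inequality is automatic). -/
def frSubdiff (E : V → ℝ) (D : Set V) (u : V) : Set (StrongDual ℝ V) :=
  {ξ | u ∈ D ∧ ∀ ε > (0:ℝ), ∀ᶠ v in 𝓝 u, v ∈ D → E u + ξ (v - u) - ε * ‖v - u‖ ≤ E v}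

/-- The extension of the energy functional by `+∞` off its effective domain `D`. -/
def Eext (E : V → ℝ) (D : Set V) (v : V) : EReal :=
  if v ∈ D then ((E v : ℝ) : EReal) else ⊤

/-- `G(u) ≤ R` for `G(u) = sup_{t∈[0,T]} E_t(u)` (with `G(u) = +∞` off the domain `D`). -/
def GSublevel (T : ℝ) (E : ℝ → V → ℝ) (D : Set V) (u : V) (R : ℝ) : Prop :=
  u ∈ D ∧ ∀ t ∈ Icc (0:ℝ) T, E t u ≤ R

/-- The functional `Φ(r,t,u,w;·) : v ↦ r Ψ_u((v-u)/r) + E_{t+r}(v) - ⟨w,v⟩`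
(with `E_{t+r} = +∞` off `D`). -/
def PhiFun (T : ℝ) (E : ℝ → V → ℝ) (D : Set V) (Ψ : V → V → ℝ)
    (r t : ℝ) (u : V) (w : StrongDual ℝ V) (v : V) : EReal :=
  ((r * Ψ u (r⁻¹ • (v - u)) - w v : ℝ) : EReal) + Eext (E (t + r)) D v

/-- The Moreau–Yosida regularization `Φ_{r,t}(w;u) = inf_v Φ(r,t,u,w;v)`. -/
def PhiInf (T : ℝ) (E : ℝ → V → ℝ) (D : Set V) (Ψ : V → V → ℝ)
    (r t : ℝ) (u : V) (w : StrongDual ℝ V) : EReal :=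
  ⨅ v : V, PhiFun T E D Ψ r t u w v

/-- The resolvent set `J_{r,t}(w;u)` of global minimizers of `Φ(r,t,u,w;·)`. -/
def resolventJ (T : ℝ) (E : ℝ → V → ℝ) (D : Set V) (Ψ : V → V → ℝ)
    (r t : ℝ) (u : V) (w : StrongDual ℝ V) : Set V :=
  {v : V | PhiFun T E D Ψ r t u w v = PhiInf T E D Ψ r t u w}

/-- **(2.Ea) Constant domain:** each `E_t` is proper and lower semicontinuous with
time-independent effective domain `D`. -/
def AssumpEa (T : ℝ) (E : ℝ → V → ℝ) (D : Set V) : Prop :=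
  D.Nonempty ∧ ∀ t ∈ Icc (0:ℝ) T, LowerSemicontinuous (Eext (E t) D)

/-- **(2.Eb) Compactness of sublevels:** for some `t* ∈ [0,T]`, `E_{t*}` has compact
sublevel sets. -/
def AssumpEb (T : ℝ) (E : ℝ → V → ℝ) (D : Set V) : Prop :=
  ∃ ts ∈ Icc (0:ℝ) T, ∀ R : ℝ, IsCompact {u : V | u ∈ D ∧ E ts u ≤ R}

/-- **(2.Ec) Energetic control of power:** for `u ∈ D`, `t ↦ E_t(u)` is continuous on
`[0,T]`, differentiable on `(0,T)` with derivative `∂ₜE_t(u) = Edot t u` and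
`|∂ₜ E_t(u)| ≤ C E_t(u)`. -/
def AssumpEc (T : ℝ) (E : ℝ → V → ℝ) (D : Set V) (Edot : ℝ → V → ℝ) (C : ℝ) : Prop :=
  0 < C ∧ ∀ u ∈ D, ContinuousOn (fun t => E t u) (Icc (0:ℝ) T) ∧
    (∀ t ∈ Ioo (0:ℝ) T, HasDerivAt (fun s => E s u) (Edot t u) t) ∧
    (∀ t ∈ Ioo (0:ℝ) T, |Edot t u| ≤ C * E t u)

/-- **(2.Ed) Chain rule:** along any absolutely continuous curve `u` with integrable
subdifferential selection `ξ`, bounded energy and finite dissipation integrals, the map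
`t ↦ E_t(u(t))` is absolutely continuous with `(d/dt) E_t(u(t)) ≥ ⟨ξ(t),u'(t)⟩ + ∂ₜE_t(u(t))`
almost everywhere. -/
def AssumpEd (T : ℝ) (E : ℝ → V → ℝ) (D : Set V) (Edot : ℝ → V → ℝ)
    (Ψ : V → V → ℝ) : Prop :=
  ∀ (u u' : ℝ → V) (ξ : ℝ → StrongDual ℝ V),
    IntegrableOn u' (Ioc 0 T) →
    (∀ t ∈ Icc (0:ℝ) T, u t = u 0 + ∫ r in (0:ℝ)..t, u' r) →
    IntegrableOn ξ (Ioc 0 T) →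
    (∃ M : ℝ, ∀ t ∈ Icc (0:ℝ) T, u t ∈ D ∧ |E t (u t)| ≤ M) →
    (∀ᵐ t ∂(volume.restrict (Ioc 0 T)), ξ t ∈ frSubdiff (E t) D (u t)) →
    IntegrableOn (fun t => Ψ (u t) (u' t)) (Ioc 0 T) →
    (∃ P : ℝ → ℝ, IntegrableOn P (Ioc 0 T) ∧
      ∀ᵐ t ∂(volume.restrict (Ioc 0 T)), conjFn (Ψ (u t)) (ξ t) = ((P t : ℝ) : EReal)) →
    ∃ e' : ℝ → ℝ, IntegrableOn e' (Ioc 0 T) ∧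
      (∀ t ∈ Icc (0:ℝ) T, E t (u t) = E 0 (u 0) + ∫ r in (0:ℝ)..t, e' r) ∧
      ∀ᵐ t ∂(volume.restrict (Ioc 0 T)), ξ t (u' t) + Edot t (u t) ≤ e' t

/-- **(2.Ee) Strong-weak closedness** of the graph of `∂E_t` together with convergence of
energy and power. -/
def AssumpEe (T : ℝ) (E : ℝ → V → ℝ) (D : Set V) (Edot : ℝ → V → ℝ) : Prop :=
  ∀ t ∈ Icc (0:ℝ) T, ∀ (un : ℕ → V) (ξn : ℕ → StrongDual ℝ V) (u : V)
    (ξ : StrongDual ℝ V) (𝓔 P : ℝ),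
    (∀ n, ξn n ∈ frSubdiff (E t) D (un n)) →
    Tendsto un atTop (𝓝 u) →
    (∀ v : V, Tendsto (fun n => ξn n v) atTop (𝓝 (ξ v))) →
    Tendsto (fun n => E t (un n)) atTop (𝓝 𝓔) →
    Tendsto (fun n => Edot t (un n)) atTop (𝓝 P) →
    ξ ∈ frSubdiff (E t) D u ∧ E t u = 𝓔 ∧ P ≤ Edot t u

/-- **(2.Ψa) Dissipation potential:** each `Ψ_u : V → [0,∞)` is lower semicontinuous and
convex with `Ψ_u(0) = 0`, and any two elements of `∂Ψ_u(v)` have the same conjugate value. -/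
def AssumpPsiA (Ψ : V → V → ℝ) : Prop :=
  ∀ u : V, LowerSemicontinuous (Ψ u) ∧ ConvexOn ℝ univ (Ψ u) ∧ Ψ u 0 = 0 ∧
    (∀ v : V, 0 ≤ Ψ u v) ∧
    ∀ (v : V) (w₁ w₂ : StrongDual ℝ V),
      w₁ ∈ cSubdiff (Ψ u) v → w₂ ∈ cSubdiff (Ψ u) v →
      conjFn (Ψ u) w₁ = conjFn (Ψ u) w₂

/-- **(2.Ψb) Superlinearity:** `Ψ_u` and `Ψ*_u` are superlinear, uniformly with respect to
`u` in sublevels of `G`. -/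
def AssumpPsiB (T : ℝ) (E : ℝ → V → ℝ) (D : Set V) (Ψ : V → V → ℝ) : Prop :=
  ∀ R > (0:ℝ),
    (∀ Kc : ℝ, ∃ ρ : ℝ, ∀ v : V, ρ ≤ ‖v‖ →
      ∀ u : V, GSublevel T E D u R → Kc * ‖v‖ ≤ Ψ u v) ∧
    (∀ Kc : ℝ, ∃ ρ : ℝ, ∀ ξ : StrongDual ℝ V, ρ ≤ ‖ξ‖ →
      ∀ u : V, GSublevel T E D u R → ((Kc * ‖ξ‖ : ℝ) : EReal) ≤ conjFn (Ψ u) ξ)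

/-- **(2.Ψc) Mosco continuity of the state dependence:** `uₙ → u` strongly with uniformly
bounded energy implies `Ψ_{uₙ}` Mosco-converges to `Ψ_u` (strong and weak liminf estimates
and strong and weak recovery sequences). -/
def AssumpPsiC (T : ℝ) (E : ℝ → V → ℝ) (D : Set V) (Ψ : V → V → ℝ) : Prop :=
  ∀ (R : ℝ) (un : ℕ → V) (u : V), Tendsto un atTop (𝓝 u) →
    (∀ n, GSublevel T E D (un n) R) →
    ((∀ (v : V) (vn : ℕ → V), Tendsto vn atTop (𝓝 v) →
        ((Ψ u v : ℝ) : EReal) ≤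
          Filter.liminf (fun n => ((Ψ (un n) (vn n) : ℝ) : EReal)) atTop)
     ∧ (∀ v : V, ∃ vn : ℕ → V, Tendsto vn atTop (𝓝 v) ∧
          Tendsto (fun n => Ψ (un n) (vn n)) atTop (𝓝 (Ψ u v)))
     ∧ (∀ (v : V) (vn : ℕ → V),
          (∀ ζ : StrongDual ℝ V, Tendsto (fun n => ζ (vn n)) atTop (𝓝 (ζ v))) →
          ((Ψ u v : ℝ) : EReal) ≤
            Filter.liminf (fun n => ((Ψ (un n) (vn n) : ℝ) : EReal)) atTop)
     ∧ (∀ v : V, ∃ vn : ℕ → V,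
          (∀ ζ : StrongDual ℝ V, Tendsto (fun n => ζ (vn n)) atTop (𝓝 (ζ v))) ∧
          Tendsto (fun n => Ψ (un n) (vn n)) atTop (𝓝 (Ψ u v))))

/-- **(2.Ba) Continuity of the perturbation** on sublevels of `G`. -/
def AssumpBa (T : ℝ) (E : ℝ → V → ℝ) (D : Set V)
    (B : ℝ → V → StrongDual ℝ V) : Prop :=
  ∀ (tn : ℕ → ℝ) (un : ℕ → V) (t : ℝ) (u : V) (R : ℝ),
    (∀ n, tn n ∈ Icc (0:ℝ) T) → t ∈ Icc (0:ℝ) T →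
    Tendsto tn atTop (𝓝 t) → Tendsto un atTop (𝓝 u) →
    (∀ n, GSublevel T E D (un n) R) →
    Tendsto (fun n => B (tn n) (un n)) atTop (𝓝 (B t u))

/-- **(2.Bb) Control of `B` by the energy:** there are `β > 0` and `c ∈ (0,1)` with
`c Ψ*_u(B(t,u)/c) ≤ β(1 + E_t(u))`. -/
def AssumpBb (T : ℝ) (E : ℝ → V → ℝ) (D : Set V) (Ψ : V → V → ℝ)
    (B : ℝ → V → StrongDual ℝ V) : Prop :=
  ∃ β > (0:ℝ), ∃ c : ℝ, 0 < c ∧ c < 1 ∧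
    ∀ u ∈ D, ∀ t ∈ Icc (0:ℝ) T,
      (c : EReal) * conjFn (Ψ u) (c⁻¹ • B t u) ≤ ((β * (1 + E t u) : ℝ) : EReal)

/-!
Comparing the minimizer `u_r` of `Φ(r,t,u,w;·)` with the competitor `u` and applying the
Fenchel–Young inequality `⟨w,z⟩ - Ψ_u(z) ≤ Ψ*_u(w)` to `z = (u_r - u)/r` gives
`E_{t+r}(u_r) ≤ E_{t+r}(u) + r Ψ*_u(w)`. The bound `|∂ₜE_t| ≤ C E_t` makes `E_s(u_r) e^{Cs}`
nondecreasing and `E_s(u_r) e^{-Cs}` nonincreasing in `s` (Gronwall), so `E_s(u_r)` differs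
from `E_{t+r}(u_r)` by a factor at most `e^{C|s-(t+r)|} ≤ e^{CT}`.
-/

theorem coe_apply_sub_le_conjFn (Ψ : V → ℝ) (ξ : StrongDual ℝ V) (v : V) :
    ((ξ v - Ψ v : ℝ) : EReal) ≤ conjFn Ψ ξ :=
  le_iSup (fun v ↦ ((ξ v - Ψ v : ℝ) : EReal)) v

theorem apply_sub_le_of_conjFn_le {Ψ : V → ℝ} {ξ : StrongDual ℝ V} {p : ℝ}
    (h : conjFn Ψ ξ ≤ p) (v : V) : ξ v - Ψ v ≤ p :=
  EReal.coe_le_coe_iff.mp ((coe_apply_sub_le_conjFn Ψ ξ v).trans h)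

theorem nonneg_of_conjFn_le {Ψ : V → ℝ} {ξ : StrongDual ℝ V} {p : ℝ} (h0 : Ψ 0 = 0)
    (h : conjFn Ψ ξ ≤ p) : 0 ≤ p := by
  simpa [h0] using apply_sub_le_of_conjFn_le h 0

section Resolvent

variable {T : ℝ} {E : ℝ → V → ℝ} {D : Set V} {Ψ : V → V → ℝ} {r t : ℝ} {u v : V}
  {w : StrongDual ℝ V}

theorem phiFun_of_mem (hv : v ∈ D) : PhiFun T E D Ψ r t u w v =
    ((r * Ψ u (r⁻¹ • (v - u)) - w v + E (t + r) v : ℝ) : EReal) := by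
  simp [PhiFun, Eext, hv]

theorem phiFun_of_notMem (hv : v ∉ D) : PhiFun T E D Ψ r t u w v = ⊤ := by
  rw [PhiFun, Eext, if_neg hv, EReal.coe_add_top]

theorem phiFun_self (hu : u ∈ D) (h0 : Ψ u 0 = 0) :
    PhiFun T E D Ψ r t u w u = ((E (t + r) u - w u : ℝ) : EReal) := by
  rw [phiFun_of_mem hu, sub_self, smul_zero, h0]
  ring_nf

theorem phiFun_le_of_mem_resolventJ (hv : v ∈ resolventJ T E D Ψ r t u w) (v' : V) :
    PhiFun T E D Ψ r t u w v ≤ PhiFun T E D Ψ r t u w v' :=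
  hv.symm ▸ iInf_le _ v'

theorem mem_of_mem_resolventJ (hu : u ∈ D) (h0 : Ψ u 0 = 0)
    (hv : v ∈ resolventJ T E D Ψ r t u w) : v ∈ D := by
  by_contra hvD
  have h := phiFun_le_of_mem_resolventJ hv u
  rw [phiFun_of_notMem hvD, phiFun_self hu h0, top_le_iff] at h
  exact EReal.coe_ne_top _ h

theorem energy_le_of_mem_resolventJ (hr : 0 < r) (hu : u ∈ D) (h0 : Ψ u 0 = 0) {p : ℝ}
    (hp : conjFn (Ψ u) w ≤ p) (hv : v ∈ resolventJ T E D Ψ r t u w) :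
    E (t + r) v ≤ E (t + r) u + r * p := by
  set z := r⁻¹ • (v - u)
  have hmin : r * Ψ u z - w v + E (t + r) v ≤ E (t + r) u - w u := by
    have h := phiFun_le_of_mem_resolventJ hv u
    rwa [phiFun_of_mem (mem_of_mem_resolventJ hu h0 hv), phiFun_self hu h0,
      EReal.coe_le_coe_iff] at h
  have hw : w v - w u = r * w z := by
    rw [← map_sub, ← smul_eq_mul, ← map_smul, smul_inv_smul₀ hr.ne']
  have hFY : r * (w z - Ψ u z) ≤ r * p :=
    mul_le_mul_of_nonneg_left (apply_sub_le_of_conjFn_le hp z) hr.le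
  linarith

end Resolvent

section Gronwall

variable {f f' : ℝ → ℝ} {a b : ℝ}

theorem monotoneOn_mul_exp_of_neg_mul_le_deriv (K : ℝ) (hf : ContinuousOn f (Icc a b))
    (hf' : ∀ x ∈ Ioo a b, HasDerivAt f (f' x) x) (hK : ∀ x ∈ Ioo a b, -(K * f x) ≤ f' x) :
    MonotoneOn (fun x ↦ f x * Real.exp (K * x)) (Icc a b) := by
  refine monotoneOn_of_hasDerivWithinAt_nonneg (convex_Icc a b)
    (f' := fun x ↦ Real.exp (K * x) * (f' x + K * f x)) (by fun_prop) (fun x hx ↦ ?_)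
    (fun x hx ↦ ?_) <;> rw [interior_Icc] at hx
  · have hexp : HasDerivAt (fun y ↦ Real.exp (K * y)) (Real.exp (K * x) * K) x := by
      simpa using ((hasDerivAt_id x).const_mul K).exp
    exact (((hf' x hx).mul hexp).congr_deriv (by ring)).hasDerivWithinAt
  · exact mul_nonneg (Real.exp_pos _).le (by linarith [hK x hx])

theorem le_exp_mul_abs_sub_mul_of_abs_deriv_le (C : ℝ) (hf : ContinuousOn f (Icc a b))
    (hf' : ∀ x ∈ Ioo a b, HasDerivAt f (f' x) x) (hC : ∀ x ∈ Ioo a b, |f' x| ≤ C * f x)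
    {s τ : ℝ} (hs : s ∈ Icc a b) (hτ : τ ∈ Icc a b) :
    f s ≤ Real.exp (C * |s - τ|) * f τ := by
  rcases le_total s τ with hsτ | hτs
  · have hmono := monotoneOn_mul_exp_of_neg_mul_le_deriv C hf hf'
      (fun x hx ↦ by linarith [neg_abs_le (f' x), hC x hx]) hs hτ hsτ
    rw [abs_of_nonpos (by linarith), ← mul_le_mul_iff_left₀ (Real.exp_pos (C * s))]
    calc f s * Real.exp (C * s) ≤ f τ * Real.exp (C * τ) := hmono
      _ = Real.exp (C * -(s - τ)) * f τ * Real.exp (C * s) := by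
        rw [mul_comm _ (f τ), mul_assoc, ← Real.exp_add]; ring_nf
  · have hmono := monotoneOn_mul_exp_of_neg_mul_le_deriv (f := -f) (f' := -f') (-C) hf.neg
      (fun x hx ↦ (hf' x hx).neg) (fun x hx ↦ by
        simp only [Pi.neg_apply]; linarith [le_abs_self (f' x), hC x hx]) hτ hs hτs
    simp only [Pi.neg_apply, neg_mul, neg_le_neg_iff] at hmono
    rw [abs_of_nonneg (by linarith), ← mul_le_mul_iff_left₀ (Real.exp_pos (-(C * s)))]
    calc f s * Real.exp (-(C * s)) ≤ f τ * Real.exp (-(C * τ)) := hmono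
      _ = Real.exp (C * (s - τ)) * f τ * Real.exp (-(C * s)) := by
        rw [mul_comm _ (f τ), mul_assoc, ← Real.exp_add]; ring_nf

end Gronwall

theorem minimizer_energy_estimate_general
    (T : ℝ)
    (E : ℝ → V → ℝ) (D : Set V) (Edot : ℝ → V → ℝ) (C : ℝ) (Ψ : V → V → ℝ)
    (hEc : AssumpEc T E D Edot C)
    (hΨ : ∀ u : V, LowerSemicontinuous (Ψ u) ∧ ConvexOn ℝ univ (Ψ u) ∧ Ψ u 0 = 0 ∧
      ∀ v : V, 0 ≤ Ψ u v)
    (t : ℝ) (ht : t ∈ Ico (0:ℝ) T) (r : ℝ) (hr : r ∈ Ioc 0 (T - t))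
    (u : V) (hu : u ∈ D) (w : StrongDual ℝ V)
    (p : ℝ) (hp : conjFn (Ψ u) w = ((p : ℝ) : EReal))
    (ur : V) (hur : ur ∈ resolventJ T E D Ψ r t u w) :
    ur ∈ D ∧ E (t + r) ur ≤ E (t + r) u + r * p ∧
    ∀ R : ℝ, (∀ s ∈ Icc (0:ℝ) T, E s u ≤ R) →
      ∀ s ∈ Icc (0:ℝ) T, E s ur ≤ Real.exp (C * T) * (R + r * p) := by
  obtain ⟨hC, hE⟩ := hEc
  have h0 : Ψ u 0 = 0 := (hΨ u).2.2.1
  have hurD : ur ∈ D := mem_of_mem_resolventJ hu h0 hur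
  have hstep := energy_le_of_mem_resolventJ hr.1 hu h0 hp.le hur
  refine ⟨hurD, hstep, fun R hR s hs ↦ ?_⟩
  have hτ : t + r ∈ Icc 0 T := ⟨by linarith [ht.1, hr.1], by linarith [hr.2]⟩
  have hmid : T / 2 ∈ Ioo 0 T := ⟨by linarith [ht.1, ht.2], by linarith [ht.1, ht.2]⟩
  -- `|∂ₜE| ≤ C E` with `C > 0` forces `E ≥ 0` on `D`, hence `R ≥ 0`.
  have hR0 : 0 ≤ R := by
    have h := (abs_nonneg _).trans ((hE u hu).2.2 _ hmid)
    exact ((mul_nonneg_iff_of_pos_left hC).mp h).trans (hR _ (Ioo_subset_Icc_self hmid))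
  have hp0 : 0 ≤ p := nonneg_of_conjFn_le h0 hp.le
  obtain ⟨hcont, hderiv, hbound⟩ := hE ur hurD
  have hdist : |s - (t + r)| ≤ T :=
    abs_sub_le_iff.mpr ⟨by linarith [hs.2, hτ.1], by linarith [hs.1, hτ.2]⟩
  calc E s ur ≤ Real.exp (C * |s - (t + r)|) * E (t + r) ur :=
        le_exp_mul_abs_sub_mul_of_abs_deriv_le C hcont hderiv hbound hs hτ
    _ ≤ Real.exp (C * |s - (t + r)|) * (R + r * p) := by gcongr; linarith [hR _ hτ]
    _ ≤ Real.exp (C * T) * (R + r * p) := by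
        gcongr
        exact add_nonneg hR0 (mul_nonneg hr.1.le hp0)

/-- **Energy estimate for minimizers** (part of Lemma 2.4, estimate (2.15)).
Every minimizer `u_r ∈ J_{r,t}(w;u)` satisfies `E_{t+r}(u_r) ≤ E_{t+r}(u) + r Ψ*_u(w)` and
consequently `G(u_r) ≤ e^{CT} (G(u) + r Ψ*_u(w))`, expressed here for any upper bound `R`
of `G(u)` and with `p` the (finite) value of `Ψ*_u(w)`. -/
theorem minimizer_energy_estimate
    (T : ℝ) (hT : 0 < T)
    (E : ℝ → V → ℝ) (D : Set V) (Edot : ℝ → V → ℝ) (C : ℝ) (Ψ : V → V → ℝ)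
    (hEa : AssumpEa T E D) (hEb : AssumpEb T E D) (hEc : AssumpEc T E D Edot C)
    (hΨ : ∀ u : V, LowerSemicontinuous (Ψ u) ∧ ConvexOn ℝ univ (Ψ u) ∧ Ψ u 0 = 0 ∧
      ∀ v : V, 0 ≤ Ψ u v)
    (t : ℝ) (ht : t ∈ Ico (0:ℝ) T) (r : ℝ) (hr : r ∈ Ioc 0 (T - t))
    (u : V) (hu : u ∈ D) (w : StrongDual ℝ V)
    (p : ℝ) (hp : conjFn (Ψ u) w = ((p : ℝ) : EReal))
    (ur : V) (hur : ur ∈ resolventJ T E D Ψ r t u w) :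
    ur ∈ D ∧ E (t + r) ur ≤ E (t + r) u + r * p ∧
    ∀ R : ℝ, (∀ s ∈ Icc (0:ℝ) T, E s u ≤ R) →
      ∀ s ∈ Icc (0:ℝ) T, E s ur ≤ Real.exp (C * T) * (R + r * p) :=
  minimizer_energy_estimate_general T E D Edot C Ψ hEc hΨ t ht r hr u hu w p hp ur hur
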